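/- arXiv:2307.02669 — 2 statements merged into one kernel-verified Lean document; each statement's English description precedes it below -/
import Mathlib

section
/- If I* > 0, then the coefficients A = 2μ+ν+βI*, B = μ(μ+ν)+(2μ+α+ν+γ)βI*, C = [(μ+α)(μ+ν)+γμ]βI* satisfy A > 0, B > 0, C > 0 and AB > C, so by the Routh–Hurwitz criterion every root of s³ + As² + Bs + C = 0 has negative real part. -/
theorem sirs_routh_hurwitz_endemic
    (β μ ν γ α I : ℝ)
    (hβ : 0 < β) (hμ : 0 < μ) (hν : 0 < ν) (hγ : 0 < γ) (hα : 0 < α) (hI : 0 < I)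
    (A B C : ℝ)
    (hA : A = 2 * μ + ν + β * I)
    (hB : B = μ * (μ + ν) + (2 * μ + α + ν + γ) * β * I)
    (hC : C = ((μ + α) * (μ + ν) + γ * μ) * β * I) :
    0 < A ∧ 0 < B ∧ 0 < C ∧ A * B > C ∧
    ∀ z : ℂ, z ^ 3 + (A : ℂ) * z ^ 2 + (B : ℂ) * z + (C : ℂ) = 0 → z.re < 0 := by
  have hApos : 0 < A := by rw [hA]; positivity
  have hBpos : 0 < B := by rw [hB]; positivity
  have hCpos : 0 < C := by rw [hC]; positivity
  have hABC : A * B > C := by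
    have key : A * B - C = (2*μ+ν)*μ*(μ+ν) + (2*μ+α+ν+γ)*(β*I)^2
        + β*I*(4*μ^2+4*μ*ν+ν^2+μ*α+μ*γ+γ*ν) := by
      rw [hA, hB, hC]; ring
    have hpos : 0 < (2*μ+ν)*μ*(μ+ν) + (2*μ+α+ν+γ)*(β*I)^2
        + β*I*(4*μ^2+4*μ*ν+ν^2+μ*α+μ*γ+γ*ν) := by positivity
    linarith
  refine ⟨hApos, hBpos, hCpos, hABC, ?_⟩
  intro z hz
  by_contra hre
  push_neg at hre
  have h1 := congrArg Complex.re hz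
  have h2 := congrArg Complex.im hz
  simp only [Complex.add_re, Complex.add_im, Complex.mul_re, Complex.mul_im,
    Complex.ofReal_re, Complex.ofReal_im, Complex.zero_re, Complex.zero_im,
    pow_succ, pow_zero, one_mul, Complex.one_re, Complex.one_im] at h1 h2
  set x := z.re with hx
  set y := z.im with hy
  rcases eq_or_ne y 0 with hy0 | hy0
  · rw [hy0] at h1
    nlinarith [mul_nonneg (mul_nonneg hre hre) hre, mul_nonneg hApos.le (mul_self_nonneg x),
      mul_nonneg hBpos.le hre]
  · have h3 : y * (3 * x ^ 2 - y ^ 2 + 2 * A * x + B) = 0 := by linear_combination h2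
    have hysq : y ^ 2 = 3 * x ^ 2 + 2 * A * x + B := by
      have := (mul_eq_zero.mp h3).resolve_left hy0
      linarith
    have e1 : x * y ^ 2 = x * (3 * x ^ 2 + 2 * A * x + B) := by rw [hysq]
    have e2 : A * y ^ 2 = A * (3 * x ^ 2 + 2 * A * x + B) := by rw [hysq]
    nlinarith [h1, e1, e2, mul_nonneg (mul_nonneg hre hre) hre,
      mul_nonneg hApos.le (mul_self_nonneg x), mul_nonneg hBpos.le hre,
      mul_nonneg (mul_self_nonneg A) hre]
end

section
/- For the quadratic x² + 2px + r with p ≥ 0 and r > 0, there is no real root x > 0. Applied with p = (γ+μ+α)cos(qπ/2) and r = (γ+μ+α)² − (βΛ/μ)²: if βΛ/μ < γ+μ+α and q ∈ (0,1], the frequency equation ω^{2q} + 2(γ+μ+α)cos(qπ/2)ω^q + (γ+μ+α)² − (βΛ/μ)² = 0 admits no solution ω > 0, so no purely imaginary characteristic root exists and the disease-free equilibrium remains stable for all delays τ ≥ 0. -/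
theorem quadratic_no_positive_root_and_no_imaginary_frequency
    (Λ β μ γ α q : ℝ)
    (hΛ : 0 < Λ) (hβ : 0 < β) (hμ : 0 < μ) (hγ : 0 < γ) (hα : 0 < α)
    (hq : 0 < q ∧ q ≤ 1)
    (hsub : β * Λ / μ < γ + μ + α) :
    (∀ p r : ℝ, 0 ≤ p → 0 < r → ∀ x : ℝ, 0 < x → x ^ 2 + 2 * p * x + r ≠ 0) ∧
    (∀ ω : ℝ, 0 < ω →
      ω ^ (2 * q) + 2 * (γ + μ + α) * Real.cos (q * Real.pi / 2) * ω ^ q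
        + (γ + μ + α) ^ 2 - (β * Λ / μ) ^ 2 ≠ 0) := by
  have key : ∀ p r : ℝ, 0 ≤ p → 0 < r → ∀ x : ℝ, 0 < x → x ^ 2 + 2 * p * x + r ≠ 0 := by
    intro p r hp hr x hx
    have : 0 < x ^ 2 + 2 * p * x + r := by positivity
    linarith
  refine ⟨key, fun ω hω => ?_⟩
  obtain ⟨hq0, hq1⟩ := hq
  have hcos : 0 ≤ Real.cos (q * Real.pi / 2) := by
    apply Real.cos_nonneg_of_mem_Icc
    constructor
    · nlinarith [Real.pi_pos]
    · nlinarith [Real.pi_pos]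
  have hc : 0 ≤ β * Λ / μ := by positivity
  have hr : 0 < (γ + μ + α) ^ 2 - (β * Λ / μ) ^ 2 := by nlinarith
  have hp : 0 ≤ (γ + μ + α) * Real.cos (q * Real.pi / 2) := by positivity
  have hrw : ω ^ (2 * q) = (ω ^ q) ^ 2 := by
    rw [mul_comm, ← Real.rpow_natCast (ω ^ q) 2, ← Real.rpow_mul hω.le]
    norm_num
  have hx : 0 < ω ^ q := Real.rpow_pos_of_pos hω q
  have := key ((γ + μ + α) * Real.cos (q * Real.pi / 2)) ((γ + μ + α) ^ 2 - (β * Λ / μ) ^ 2)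
    hp hr (ω ^ q) hx
  rw [hrw]
  intro h
  apply this
  ring_nf
  ring_nf at h
  linarith
end
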